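/- Let I ⊆ ℝ₊ be a nonempty interval and n ≥ 2. Then ((r,s),(p,q)) ∈ Γ_n(I) if and only if for all u_1,…,u_n > 0 satisfying χ_{r,s}(u_1)+⋯+χ_{r,s}(u_n) = 0 and max(u_1,…,u_n)·inf(I·I^{-1}) ≤ min(u_1,…,u_n), the inequality 0 ≤ χ_{p,q}(u_1)+⋯+χ_{p,q}(u_n) holds. -/

import Mathlib

open Real Finset Pointwise

noncomputable def gini (p q : ℝ) {n : ℕ} (x : Fin n → ℝ) : ℝ :=
  if p = q then Real.exp ((∑ i, x i ^ p * Real.log (x i)) / ∑ i, x i ^ p)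
  else ((∑ i, x i ^ p) / ∑ i, x i ^ q) ^ (1 / (p - q))
noncomputable def chi (p q : ℝ) (u : ℝ) : ℝ :=
  if p = q then u ^ p * Real.log u else (u ^ p - u ^ q) / (p - q)
def Gamma (n : ℕ) (I : Set ℝ) : Set ((ℝ × ℝ) × (ℝ × ℝ)) :=
  {w | ∀ x : Fin n → ℝ, (∀ i, x i ∈ I) → gini w.1.1 w.1.2 x ≤ gini w.2.1 w.2.2 x}

/-!
Gini means are positively homogeneous of degree one, so membership in `Gamma n I` only concerns
rays through `I^n`; and `log (gini p q u)` is a positive multiple of `∑ i, chi p q (u i)`, so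
`gini r s u = 1` exactly when `∑ i, chi r s (u i) = 0`. A positive vector `u` lies on a ray
meeting `I^n` as soon as `min u / max u` dominates some element of `I * I⁻¹`.

Normalising `x ∈ I^n` by `gini r s x` gives the reverse implication. In the forward one the
ratio condition is not strict, so the hypothesis is applied to `u ^ t` for `t < 1`, whose ratio
`(min u / max u) ^ t` is strictly larger, and `t → 1` by continuity of Gini means.
-/

variable {n : ℕ}

lemma continuousAt_sum_rpow {x : Fin n → ℝ} (hx : ∀ i, x i ≠ 0) (p : ℝ) :
    ContinuousAt (fun y : Fin n → ℝ => ∑ i, y i ^ p) x :=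
  tendsto_finsetSum _ fun i _ => (continuous_apply i).continuousAt.rpow_const (Or.inl (hx i))

section Gini

variable [NeZero n] {p q : ℝ} {u : Fin n → ℝ}

lemma sum_rpow_pos (hu : ∀ i, 0 < u i) (p : ℝ) : 0 < ∑ i, u i ^ p :=
  sum_pos (fun i _ => rpow_pos_of_pos (hu i) p) univ_nonempty

lemma gini_pos (hu : ∀ i, 0 < u i) : 0 < gini p q u := by
  unfold gini
  split_ifs
  · exact exp_pos _
  · exact rpow_pos_of_pos (div_pos (sum_rpow_pos hu p) (sum_rpow_pos hu q)) _

lemma gini_smul {c : ℝ} (hc : 0 < c) (hu : ∀ i, 0 < u i) :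
    gini p q (c • u) = c * gini p q u := by
  have hsum (e : ℝ) : ∑ i, (c • u) i ^ e = c ^ e * ∑ i, u i ^ e := by
    simp only [Pi.smul_apply, smul_eq_mul, mul_sum, mul_rpow hc.le (hu _).le]
  by_cases hpq : p = q
  · have hlog : ∑ i, (c • u) i ^ p * log ((c • u) i) =
        c ^ p * (log c * ∑ i, u i ^ p + ∑ i, u i ^ p * log (u i)) := by
      simp only [Pi.smul_apply, smul_eq_mul, mul_add, mul_sum, ← sum_add_distrib,
        mul_rpow hc.le (hu _).le, log_mul hc.ne' (hu _).ne']
      exact sum_congr rfl fun i _ => by ring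
    simp only [gini, if_pos hpq]
    rw [hlog, hsum, mul_div_mul_left _ _ (rpow_pos_of_pos hc p).ne', add_div,
      mul_div_cancel_right₀ _ (sum_rpow_pos hu p).ne', exp_add, exp_log hc]
  · simp only [gini, if_neg hpq]
    rw [hsum, hsum, mul_div_mul_comm, ← rpow_sub hc,
      mul_rpow (rpow_pos_of_pos hc _).le (div_pos (sum_rpow_pos hu p) (sum_rpow_pos hu q)).le,
      ← rpow_mul hc.le, mul_one_div_cancel (sub_ne_zero.2 hpq), rpow_one]

lemma exists_pos_log_sub_log_eq_mul {a b : ℝ} (ha : 0 < a) (hb : 0 < b) :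
    ∃ c > 0, log a - log b = c * (a - b) := by
  rcases eq_or_ne a b with rfl | hab
  · exact ⟨1, one_pos, by simp⟩
  refine ⟨(log a - log b) / (a - b), ?_, by field_simp [sub_ne_zero.2 hab]⟩
  rcases hab.lt_or_gt with h | h
  · exact div_pos_of_neg_of_neg (sub_neg.2 (log_lt_log ha h)) (sub_neg.2 h)
  · exact div_pos (sub_pos.2 (log_lt_log hb h)) (sub_pos.2 h)

lemma exists_pos_log_gini_eq_mul_sum_chi (hu : ∀ i, 0 < u i) :
    ∃ c > 0, log (gini p q u) = c * ∑ i, chi p q (u i) := by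
  have hp := sum_rpow_pos hu p
  by_cases hpq : p = q
  · refine ⟨(∑ i, u i ^ p)⁻¹, inv_pos.2 hp, ?_⟩
    simp only [gini, chi, if_pos hpq, log_exp, div_eq_inv_mul]
  · have hq := sum_rpow_pos hu q
    obtain ⟨c, hc, h⟩ := exists_pos_log_sub_log_eq_mul hp hq
    refine ⟨c, hc, ?_⟩
    simp only [gini, chi, if_neg hpq]
    rw [log_rpow (div_pos hp hq), log_div hp.ne' hq.ne', h, ← sum_div, sum_sub_distrib]
    ring

lemma one_le_gini_iff (hu : ∀ i, 0 < u i) : 1 ≤ gini p q u ↔ 0 ≤ ∑ i, chi p q (u i) := by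
  obtain ⟨c, hc, h⟩ := exists_pos_log_gini_eq_mul_sum_chi (p := p) (q := q) hu
  rw [← log_nonneg_iff (gini_pos hu), h, mul_nonneg_iff_of_pos_left hc]

lemma gini_eq_one_iff (hu : ∀ i, 0 < u i) : gini p q u = 1 ↔ ∑ i, chi p q (u i) = 0 := by
  obtain ⟨c, hc, h⟩ := exists_pos_log_gini_eq_mul_sum_chi (p := p) (q := q) hu
  constructor
  · intro h1
    rw [h1, log_one, eq_comm, mul_eq_zero] at h
    exact h.resolve_left hc.ne'
  · intro h0
    rw [h0, mul_zero] at h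
    exact eq_one_of_pos_of_log_eq_zero (gini_pos hu) h

lemma continuousAt_gini {x : Fin n → ℝ} (hx : ∀ i, 0 < x i) : ContinuousAt (gini p q) x := by
  have hx0 i : x i ≠ 0 := (hx i).ne'
  show ContinuousAt (fun y => gini p q y) x
  have hcoord i : ContinuousAt (fun y : Fin n → ℝ => y i) x := (continuous_apply i).continuousAt
  by_cases hpq : p = q
  · simp only [gini, if_pos hpq]
    refine (ContinuousAt.div (tendsto_finsetSum _ fun i _ => ?_) (continuousAt_sum_rpow hx0 p)
      (sum_rpow_pos hx p).ne').rexp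
    exact ((hcoord i).rpow_const (Or.inl (hx0 i))).mul ((hcoord i).log (hx0 i))
  · simp only [gini, if_neg hpq]
    exact ((continuousAt_sum_rpow hx0 p).div (continuousAt_sum_rpow hx0 q)
      (sum_rpow_pos hx q).ne').rpow_const
      (Or.inl (div_pos (sum_rpow_pos hx p) (sum_rpow_pos hx q)).ne')

end Gini

section Interval

variable {I : Set ℝ}

lemma div_mul_mem_of_mul_le_mul (hIconn : I.OrdConnected) {X Y m M v : ℝ} (hX : X ∈ I) (hY : Y ∈ I)
    (hX0 : 0 ≤ X) (hm : 0 < m) (hXY : X * M ≤ Y * m) (hmv : m ≤ v) (hvM : v ≤ M) :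
    X / m * v ∈ I := by
  refine hIconn.out hX hY ⟨?_, ?_⟩
  · rw [div_mul_eq_mul_div, le_div_iff₀ hm]
    exact mul_le_mul_of_nonneg_left hmv hX0
  · rw [div_mul_eq_mul_div, div_le_iff₀ hm]
    exact (mul_le_mul_of_nonneg_left hvM hX0).trans hXY

lemma exists_mem_mul_inv_mul_rpow_le (hI : I.Nonempty) (hIpos : I ⊆ Set.Ioi 0) {m M t : ℝ}
    (hm : 0 < m) (hmM : m ≤ M) (hM : M * sInf (I * I⁻¹) ≤ m) (ht : t ∈ Set.Ioo 0 1) :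
    ∃ z ∈ I * I⁻¹, z * M ^ t ≤ m ^ t := by
  obtain ⟨x, hx⟩ := hI
  have hxx : x * x⁻¹ ∈ I * I⁻¹ := Set.mul_mem_mul hx (Set.inv_mem_inv.2 hx)
  rcases hmM.eq_or_lt with rfl | hlt
  · exact ⟨_, hxx, by rw [mul_inv_cancel₀ (hIpos hx).ne', one_mul]⟩
  have hM0 : 0 < M := hm.trans hlt
  have hlt' : sInf (I * I⁻¹) < (m / M) ^ t := calc
    sInf (I * I⁻¹) ≤ m / M := by rwa [le_div_iff₀ hM0, mul_comm]
    _ < (m / M) ^ t := by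
      simpa using rpow_lt_rpow_of_exponent_gt (div_pos hm hM0) ((div_lt_one hM0).2 hlt) ht.2
  obtain ⟨z, hz, hzlt⟩ := exists_lt_of_csInf_lt ⟨_, hxx⟩ hlt'
  rw [div_rpow hm.le hM0.le, lt_div_iff₀ (rpow_pos_of_pos hM0 t)] at hzlt
  exact ⟨z, hz, hzlt.le⟩

lemma sup'_smul_mul_sInf_le_inf' (hIpos : I ⊆ Set.Ioi 0) {ι : Type*} {s : Finset ι}
    (hs : s.Nonempty) {x : ι → ℝ} (hx : ∀ i, x i ∈ I) {c : ℝ} (hc : 0 ≤ c) :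
    s.sup' hs (c • x) * sInf (I * I⁻¹) ≤ s.inf' hs (c • x) := by
  have hbdd : BddBelow (I * I⁻¹) := by
    refine ⟨0, ?_⟩
    rintro _ ⟨a, ha, b, hb, rfl⟩
    exact mul_nonneg (hIpos ha).le (inv_pos.1 (hIpos (Set.mem_inv.1 hb))).le
  obtain ⟨j, -, hj⟩ := exists_mem_eq_sup' hs (c • x)
  have hxj : x j ≠ 0 := (hIpos (hx j)).ne'
  refine le_inf' hs _ fun i _ => ?_
  calc s.sup' hs (c • x) * sInf (I * I⁻¹)
      ≤ (c • x) j * (x i * (x j)⁻¹) := by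
        rw [hj]
        exact mul_le_mul_of_nonneg_left
          (csInf_le hbdd (Set.mul_mem_mul (hx i) (Set.inv_mem_inv.2 (hx j))))
          (mul_nonneg hc (hIpos (hx j)).le)
    _ = (c • x) i := by
        simp only [Pi.smul_apply, smul_eq_mul]
        field_simp [hxj]

variable [NeZero n] {r s p q : ℝ} {u : Fin n → ℝ}

lemma gini_le_gini_of_mem_Gamma_of_bounds (hIpos : I ⊆ Set.Ioi 0) (hIconn : I.OrdConnected)
    (h : ((r, s), (p, q)) ∈ Gamma n I) (hu : ∀ i, 0 < u i) {m M z : ℝ} (hm : 0 < m)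
    (hmu : ∀ i, m ≤ u i) (huM : ∀ i, u i ≤ M) (hz : z ∈ I * I⁻¹) (hzM : z * M ≤ m) :
    gini r s u ≤ gini p q u := by
  obtain ⟨X, hX, Y, hY, rfl⟩ := hz
  rw [Set.mem_inv] at hY
  have hY0 : 0 < Y⁻¹ := hIpos hY
  have hd : 0 < X / m := div_pos (hIpos hX) hm
  have hXY : X * M ≤ Y⁻¹ * m := calc
    X * M = X * Y * M * Y⁻¹ := by field_simp [(inv_pos.1 hY0).ne']
    _ ≤ m * Y⁻¹ := mul_le_mul_of_nonneg_right hzM hY0.le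
    _ = Y⁻¹ * m := mul_comm _ _
  have hmem := h ((X / m) • u) fun i =>
    div_mul_mem_of_mul_le_mul hIconn hX hY (hIpos hX).le hm hXY (hmu i) (huM i)
  rw [gini_smul hd hu, gini_smul hd hu] at hmem
  exact le_of_mul_le_mul_left hmem hd

lemma gini_le_gini_of_mem_Gamma (hI : I.Nonempty) (hIpos : I ⊆ Set.Ioi 0)
    (hIconn : I.OrdConnected) (h : ((r, s), (p, q)) ∈ Gamma n I) (hu : ∀ i, 0 < u i)
    (hratio : univ.sup' univ_nonempty u * sInf (I * I⁻¹) ≤ univ.inf' univ_nonempty u) :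
    gini r s u ≤ gini p q u := by
  obtain ⟨i₀, -, hi₀⟩ := exists_mem_eq_inf' univ_nonempty u
  have hm : 0 < univ.inf' univ_nonempty u := hi₀ ▸ hu i₀
  have hmu i : univ.inf' univ_nonempty u ≤ u i := inf'_le u (mem_univ i)
  have huM i : u i ≤ univ.sup' univ_nonempty u := le_sup' u (mem_univ i)
  have hpow : ∀ t ∈ Set.Ioo (0 : ℝ) 1, gini r s (u ^ t) ≤ gini p q (u ^ t) := fun t ht => by
    obtain ⟨z, hz, hzM⟩ :=
      exists_mem_mul_inv_mul_rpow_le hI hIpos hm ((hmu i₀).trans (huM i₀)) hratio ht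
    exact gini_le_gini_of_mem_Gamma_of_bounds hIpos hIconn h (fun i => rpow_pos_of_pos (hu i) t)
      (rpow_pos_of_pos hm t) (fun i => rpow_le_rpow hm.le (hmu i) ht.1.le)
      (fun i => rpow_le_rpow (hu i).le (huM i) ht.1.le) hz hzM
  have hcont (p q : ℝ) : ContinuousAt (fun t : ℝ => gini p q (u ^ t)) 1 :=
    (continuousAt_gini (by simpa using hu)).comp <|
      continuousAt_pi.2 fun i => continuousAt_const_rpow (hu i).ne'
  have hlim := le_of_tendsto_of_tendsto ((hcont r s).tendsto.mono_left nhdsWithin_le_nhds)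
    ((hcont p q).tendsto.mono_left nhdsWithin_le_nhds)
    (Filter.eventually_of_mem (Ioo_mem_nhdsLT one_pos) hpow)
  simpa using hlim

end Interval

theorem Gamma_characterization (I : Set ℝ) (hI : I.Nonempty) (hIpos : I ⊆ Set.Ioi 0)
    (hIint : I.OrdConnected) (n : ℕ) (hn : 2 ≤ n) (r s p q : ℝ) :
    ((r, s), (p, q)) ∈ Gamma n I ↔
      ∀ u : Fin n → ℝ, (∀ i, 0 < u i) →
        (∑ i, chi r s (u i) = 0) →
        (Finset.univ.sup' (Finset.univ_nonempty_iff.mpr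
            (Fin.pos_iff_nonempty.mp (by omega))) u) * sInf (I * I⁻¹) ≤
          Finset.univ.inf' (Finset.univ_nonempty_iff.mpr
            (Fin.pos_iff_nonempty.mp (by omega))) u →
        0 ≤ ∑ i, chi p q (u i) := by
  have : NeZero n := ⟨by omega⟩
  constructor
  · intro h u hu hsum hratio
    rw [← gini_eq_one_iff hu] at hsum
    rw [← one_le_gini_iff hu, ← hsum]
    exact gini_le_gini_of_mem_Gamma hI hIpos hIint h hu hratio
  · intro H x hx
    have hx0 i : 0 < x i := hIpos (hx i)
    have hc : 0 < (gini r s x)⁻¹ := inv_pos.2 (gini_pos hx0)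
    have hu i : 0 < ((gini r s x)⁻¹ • x) i := mul_pos hc (hx0 i)
    have hnorm : gini r s ((gini r s x)⁻¹ • x) = 1 := by
      rw [gini_smul hc hx0, inv_mul_cancel₀ (gini_pos hx0).ne']
    have hge := (one_le_gini_iff hu).2 <| H _ hu ((gini_eq_one_iff hu).1 hnorm)
      (sup'_smul_mul_sInf_le_inf' hIpos _ hx hc.le)
    rwa [gini_smul hc hx0, le_inv_mul_iff₀ (gini_pos hx0), mul_one] at hge
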